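/- arXiv:2412.08290 — 6 statements merged into one kernel-verified Lean document; each statement's English description precedes it below -/
import Mathlib

section
/- The Moore determinant factorization: for a prime power q and variables x_1, ..., x_ℓ in the polynomial ring F_q[x_1,...,x_ℓ], the determinant of the ℓ×ℓ matrix with (i,j)-entry x_i^(q^(j-1)) equals the product over i = 1,...,ℓ of the product over all (c_1,...,c_(i-1)) ∈ F_q^(i-1) of (c_1 x_1 + ... + c_(i-1) x_(i-1) + x_i). -/
section aux
open Matrix Polynomial Finset

set_option linter.unusedSectionVars false
set_option maxHeartbeats 1000000

variable {F : Type*} [Field F] [Fintype F] {K : Type*} [CommRing K] [Algebra F K]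

lemma gext_sum' {n : ℕ} (x : Fin n → K) (i : Fin n) (c : Fin (i:ℕ) → F)
    (g : Fin n → F)
    (hg : g = fun s : Fin n => if h : (s:ℕ) < (i:ℕ) then c ⟨(s:ℕ), h⟩ else if s = i then 1 else 0) :
    ∑ s : Fin n, algebraMap F K (g s) * x s =
      (∑ t : Fin (i:ℕ), algebraMap F K (c t) * x (Fin.castLE i.isLt.le t)) + x i := by
  classical
  subst hg
  rw [← Finset.sum_filter_add_sum_filter_not Finset.univ (fun s : Fin n => (s:ℕ) < (i:ℕ))]
  congr 1
  · refine Finset.sum_bij' (fun s hs => (⟨(s:ℕ), (Finset.mem_filter.mp hs).2⟩ : Fin (i:ℕ)))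
      (fun t _ => Fin.castLE i.isLt.le t) ?_ ?_ ?_ ?_ ?_
    · intro s hs; simp
    · intro t ht
      simp only [Finset.mem_filter, Finset.mem_univ, true_and]
      exact t.isLt
    · intro s hs; ext; simp
    · intro t ht; rfl
    · intro s hs
      have h : (s:ℕ) < (i:ℕ) := (Finset.mem_filter.mp hs).2
      simp [h]
  · rw [Finset.sum_eq_single i]
    · simp
    · intro s hs hsi
      have h : ¬ (s:ℕ) < (i:ℕ) := by simpa using (Finset.mem_filter.mp hs).2
      simp [h, hsi]
    · intro h
      exact absurd (Finset.mem_filter.mpr ⟨Finset.mem_univ i, by simp⟩) h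

lemma lin_ne_zero {n : ℕ} {x : Fin n → K} (hx : LinearIndependent F x)
    (i : Fin n) (c : Fin (i:ℕ) → F) :
    (∑ t : Fin (i:ℕ), algebraMap F K (c t) * x (Fin.castLE i.isLt.le t)) + x i ≠ 0 := by
  classical
  intro h
  rw [← gext_sum' x i c (fun s : Fin n => if h : (s:ℕ) < (i:ℕ) then c ⟨(s:ℕ), h⟩ else if s = i then 1 else 0) rfl] at h
  have := (Fintype.linearIndependent_iff.mp hx) (fun s : Fin n => if h : (s:ℕ) < (i:ℕ) then c ⟨(s:ℕ), h⟩ else if s = i then 1 else 0) (by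
    simpa [Algebra.smul_def] using h) i
  simp at this

lemma lin_inj {n : ℕ} {x : Fin n → K} (hx : LinearIndependent F x) :
    Function.Injective (fun c : Fin n → F => ∑ t : Fin n, algebraMap F K (c t) * x t) := by
  intro c c' h
  simp only at h
  have h2 : ∑ t : Fin n, (c t - c' t) • x t = 0 := by
    simp only [Algebra.smul_def, map_sub, sub_mul, Finset.sum_sub_distrib, h, sub_self]
  funext t
  exact sub_eq_zero.mp (Fintype.linearIndependent_iff.mp hx (fun t => c t - c' t) h2 t)

theorem moore_key [IsDomain K] :
    ∀ (n : ℕ) (x : Fin n → K), LinearIndependent F x →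
    (Matrix.of fun i j : Fin n => x i ^ (Fintype.card F) ^ (j:ℕ)).det =
      ∏ i : Fin n, ∏ c : Fin (i:ℕ) → F,
        ((∑ t : Fin (i:ℕ), algebraMap F K (c t) * x (Fin.castLE i.isLt.le t)) + x i) := by
  classical
  intro n
  induction n with
  | zero => intro x hx; simp [Matrix.det_isEmpty]
  | succ n IH =>
    intro x hx
    set q := Fintype.card F with hqdef
    -- basic setup
    set y : Fin n → K := x ∘ Fin.castSucc with hydef
    have hy : LinearIndependent F y := hx.comp _ (Fin.castSucc_injective n)
    have hIH := IH y hy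
    set D : K := (Matrix.of fun i j : Fin n => y i ^ q ^ (j:ℕ)).det with hDdef
    have hD : D ≠ 0 := by
      rw [hIH]
      rw [Finset.prod_ne_zero_iff]
      intro i _
      rw [Finset.prod_ne_zero_iff]
      intro c _
      exact lin_ne_zero hy i c
    -- characteristic
    have hq2 : 1 < q := Fintype.one_lt_card
    set p := ringChar F with hpdef
    have hp : p.Prime := CharP.char_is_prime F p
    haveI : Fact p.Prime := ⟨hp⟩
    haveI : CharP K p := charP_of_injective_algebraMap (algebraMap F K).injective p
    obtain ⟨m, -, hm⟩ := FiniteField.card F p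
    -- the linear forms
    set s : (Fin n → F) → K := fun c => ∑ t : Fin n, algebraMap F K (c t) * y t with hsdef
    have hsinj : Function.Injective s := lin_inj hy
    have hfrob : ∀ (j : ℕ) (c : Fin n → F),
        (s c) ^ q ^ j = ∑ t : Fin n, algebraMap F K (c t) * (y t) ^ q ^ j := by
      intro j c
      have hq' : q ^ j = p ^ ((m:ℕ) * j) := by rw [hqdef, hm, ← pow_mul]
      rw [hsdef]
      simp only
      rw [hq', sum_pow_char_pow]
      refine Finset.sum_congr rfl fun t _ => ?_
      rw [mul_pow, ← map_pow, ← hq', FiniteField.pow_card_pow]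
    -- the polynomial
    set A : Matrix (Fin (n+1)) (Fin (n+1)) K[X] := Matrix.of fun i j =>
      if i = Fin.last n then (X : K[X]) ^ q ^ (j:ℕ) else C (x i ^ q ^ (j:ℕ)) with hAdef
    set P : K[X] := A.det with hPdef
    have heval : ∀ t : K, P.eval t =
        (Matrix.of fun i j : Fin (n+1) =>
          (Function.update x (Fin.last n) t) i ^ q ^ (j:ℕ)).det := by
      intro t
      have h1 : P.eval t = ((Polynomial.evalRingHom t).mapMatrix A).det := by
        rw [hPdef, ← RingHom.map_det]; rfl
      rw [h1]
      congr 1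
      ext i j
      by_cases hi : i = Fin.last n
      · subst hi; simp [hAdef, Function.update_self]
      · simp [hAdef, hi, Function.update_apply]
    -- roots
    have hroot : ∀ c : Fin n → F, P.eval (s c) = 0 := by
      intro c
      rw [heval]
      set M : Matrix (Fin (n+1)) (Fin (n+1)) K :=
        Matrix.of fun i j => x i ^ q ^ (j:ℕ) with hMdef
      set d : Fin (n+1) → K := fun k =>
        if h : (k:ℕ) < n then algebraMap F K (c ⟨(k:ℕ), h⟩) else 0 with hddef
      have hup : (Matrix.of fun i j : Fin (n+1) =>
          (Function.update x (Fin.last n) (s c)) i ^ q ^ (j:ℕ)) =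
          M.updateRow (Fin.last n) (∑ k, d k • M k) := by
        ext i j
        by_cases hi : i = Fin.last n
        · subst hi
          rw [Matrix.of_apply, Matrix.updateRow_self, Function.update_self]
          have : (∑ k, d k • M k) j = ∑ k : Fin (n+1), d k * M k j := by
            simp [Finset.sum_apply]
          rw [this, Fin.sum_univ_castSucc]
          have hdlast : d (Fin.last n) = 0 := by simp [hddef]
          rw [hdlast, zero_mul, add_zero, hfrob]
          refine Finset.sum_congr rfl fun t _ => ?_
          have hdt : d (Fin.castSucc t) = algebraMap F K (c t) := by
            simp [hddef, t.isLt]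
          rw [hdt]
          rfl
        · rw [Matrix.of_apply, Matrix.updateRow_ne hi, Function.update_apply, if_neg hi]
          rfl
      rw [hup, Matrix.det_updateRow_sum M (Fin.last n) d]
      simp [hddef]
    -- cofactor expansion
    set minor : Fin (n+1) → K := fun j =>
      (Matrix.of fun i' j' : Fin n =>
        x (Fin.castSucc i') ^ q ^ ((j.succAbove j' : Fin (n+1)) : ℕ)).det with hminordef
    have hP : P = ∑ j : Fin (n+1), C ((-1)^(n + (j:ℕ)) * minor j) * X ^ q ^ (j:ℕ) := by
      rw [hPdef, Matrix.det_succ_row A (Fin.last n)]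
      refine Finset.sum_congr rfl fun j _ => ?_
      have h1 : A (Fin.last n) j = (X : K[X]) ^ q ^ (j:ℕ) := by simp [hAdef]
      have h2 : (A.submatrix (Fin.last n).succAbove j.succAbove).det = C (minor j) := by
        have : A.submatrix (Fin.last n).succAbove j.succAbove =
            (C : K →+* K[X]).mapMatrix (Matrix.of fun i' j' : Fin n =>
              x (Fin.castSucc i') ^ q ^ ((j.succAbove j' : Fin (n+1)) : ℕ)) := by
          ext i' j'
          have hne : (i'.castSucc : Fin (n+1)) ≠ Fin.last n := (Fin.castSucc_lt_last i').ne
          simp only [hAdef, Matrix.submatrix_apply, Fin.succAbove_last, Matrix.of_apply,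
            RingHom.mapMatrix_apply, Matrix.map_apply, if_neg hne]
        rw [this, ← RingHom.map_det]
      rw [h1, h2, _root_.map_mul, _root_.map_pow, map_neg, _root_.map_one]
      have : ((Fin.last n : Fin (n+1)) : ℕ) = n := rfl
      rw [this]
      ring
    have hminorlast : minor (Fin.last n) = D := by
      rw [hminordef, hDdef]
      apply congrArg Matrix.det
      ext i' j'
      simp [Fin.succAbove_last, hydef]
    -- coefficient at q^n
    have hcoeffP : P.coeff (q ^ n) = D := by
      rw [hP, finset_sum_coeff]
      rw [Finset.sum_eq_single (Fin.last n)]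
      · rw [coeff_C_mul, coeff_X_pow]
        have : ((Fin.last n : Fin (n+1)) : ℕ) = n := rfl
        rw [this, if_pos rfl, mul_one, hminorlast]
        have : (-1 : K) ^ (n + n) = 1 := Even.neg_one_pow ⟨n, rfl⟩
        rw [this, one_mul]
      · intro j _ hj
        rw [coeff_C_mul, coeff_X_pow, if_neg, mul_zero]
        intro hqq
        apply hj
        have := Nat.pow_right_injective hq2 hqq.symm
        exact Fin.ext (by simpa using this)
      · intro h; exact absurd (Finset.mem_univ _) h
    have hdegP : P.natDegree ≤ q ^ n := by
      rw [hP]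
      refine natDegree_sum_le_of_forall_le _ _ fun j _ => ?_
      refine le_trans (natDegree_C_mul_le _ _) ?_
      rw [natDegree_X_pow]
      exact Nat.pow_le_pow_right (by omega) (Nat.lt_succ_iff.mp j.isLt)
    -- the product of linear factors
    set Q : K[X] := ∏ c : Fin n → F, (X - C (s c)) with hQdef
    have hQmonic : Q.Monic := monic_prod_of_monic _ _ fun c _ => monic_X_sub_C _
    have hcard : Fintype.card (Fin n → F) = q ^ n := by
      rw [Fintype.card_fun, Fintype.card_fin]
    have hQdeg : Q.natDegree = q ^ n := by
      rw [hQdef, natDegree_prod _ _ fun c _ => X_sub_C_ne_zero _]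
      simp [natDegree_X_sub_C, hcard]
    have hcoeffQ : Q.coeff (q ^ n) = 1 := by
      rw [← hQdeg]; exact hQmonic
    -- the difference vanishes
    set R : K[X] := P - C D * Q with hRdef
    have hRcoeff : R.coeff (q ^ n) = 0 := by
      rw [hRdef, coeff_sub, coeff_C_mul, hcoeffP, hcoeffQ, mul_one, sub_self]
    have hRdeg : R.natDegree ≤ q ^ n := by
      refine le_trans (natDegree_sub_le _ _) (max_le hdegP ?_)
      exact le_trans (natDegree_C_mul_le _ _) hQdeg.le
    have hReval : ∀ c : Fin n → F, R.eval (s c) = 0 := by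
      intro c
      rw [hRdef, eval_sub, hroot c, eval_mul, eval_C, hQdef, eval_prod]
      rw [Finset.prod_eq_zero (Finset.mem_univ c) (by simp)]
      simp
    have hR0 : R = 0 := by
      by_contra hR
      have hlt : R.natDegree < q ^ n := by
        refine lt_of_le_of_ne hRdeg fun h => hR ?_
        refine leadingCoeff_eq_zero.mp ?_
        rwa [leadingCoeff, h]
      exact hR (Polynomial.eq_zero_of_natDegree_lt_card_of_eval_eq_zero R hsinj hReval
        (by rwa [hcard]))
    have hPQ : P = C D * Q := sub_eq_zero.mp hR0
    -- evaluate at x (last)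
    have hdetP : (Matrix.of fun i j : Fin (n+1) => x i ^ q ^ (j:ℕ)).det
        = P.eval (x (Fin.last n)) := by
      rw [heval (x (Fin.last n)), Function.update_eq_self]
    have hsneg : ∀ c : Fin n → F, s (-c) = - s c := by
      intro c
      rw [hsdef]
      simp [← Finset.sum_neg_distrib]
    have hprodneg : ∏ c : Fin n → F, (s c + x (Fin.last n))
        = ∏ c : Fin n → F, (x (Fin.last n) - s c) := by
      refine Fintype.prod_equiv (Equiv.neg (Fin n → F)) _ _ fun c => ?_
      rw [Equiv.neg_apply, hsneg]
      ring
    have hmain : (Matrix.of fun i j : Fin (n+1) => x i ^ q ^ (j:ℕ)).det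
        = D * ∏ c : Fin n → F, (s c + x (Fin.last n)) := by
      rw [hdetP, hPQ, eval_mul, eval_C, hQdef, eval_prod, hprodneg]
      simp only [eval_sub, eval_X, eval_C]
    rw [hmain, Fin.prod_univ_castSucc]
    congr 1


end aux

open MvPolynomial

/-- The Moore determinant factorization over a finite field `F` with `q` elements:
the determinant of the matrix with `(i,j)` entry `(X i)^(q^j)` equals the product,
over `i`, of all monic linear forms `c₁ x₁ + ⋯ + c_{i-1} x_{i-1} + x_i`. -/
theorem moore_det_factorization {F : Type*} [Field F] [Fintype F] (q : ℕ)
    (hq : q = Fintype.card F) (ℓ : ℕ) :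
    (Matrix.of fun i j : Fin ℓ =>
        (X i : MvPolynomial (Fin ℓ) F) ^ q ^ (j : ℕ)).det =
      ∏ i : Fin ℓ, ∏ c : Fin (i : ℕ) → F,
        ((∑ t : Fin (i : ℕ), C (c t) * X (Fin.castLE i.isLt.le t)) + X i) := by
  subst hq
  have := moore_key (F := F) (K := MvPolynomial (Fin ℓ) F) ℓ X
    (MvPolynomial.linearIndependent_X (R := F) (σ := Fin ℓ))
  simpa [MvPolynomial.algebraMap_eq] using this
end

section
/- Let A be a finite set of hyperplanes (codimension-1 linear subspaces) in F_q^ℓ and define N(k) to be the number of points of (F_{q^k})^ℓ lying on none of the hyperplanes H ⊗ F_{q^k} (the extension of scalars of H to F_{q^k}). If N(k) = 0 for some k ≥ 0, then N(j) = 0 for all 0 ≤ j ≤ k. -/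
/-!
Both `L` and `K` are `F`-vector spaces, of dimensions `j ≤ k`, so there is an injective
`F`-linear map `f : L → K`. The extended forms have coefficients in `F`, hence commute with
`f`; applying `f` coordinatewise to a point of `L^ℓ` off all hyperplanes gives one in `K^ℓ`.
-/

open Module

theorem Module.finrank_le_finrank_of_card_le {F V W : Type*} [Field F] [Fintype F]
    [AddCommGroup V] [Module F V] [Fintype V] [AddCommGroup W] [Module F W] [Fintype W]
    (h : Fintype.card V ≤ Fintype.card W) : finrank F V ≤ finrank F W := by
  rw [card_eq_pow_finrank (K := F) (V := V), card_eq_pow_finrank (K := F) (V := W)] at h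
  exact (pow_le_pow_iff_right₀ Fintype.one_lt_card).mp h

theorem LinearMap.map_sum_algebraMap_mul {F A B ι : Type*} [CommSemiring F] [Semiring A]
    [Semiring B] [Algebra F A] [Algebra F B] [Fintype ι] (f : A →ₗ[F] B) (a : ι → F)
    (x : ι → A) :
    f (∑ i, algebraMap F A (a i) * x i) = ∑ i, algebraMap F B (a i) * f (x i) := by
  simp only [← Algebra.smul_def, map_sum, map_smul]

theorem avoid_hyperplanes_smaller_extension_general
    {F K L : Type*} [Field F] [Fintype F] [Field K] [Fintype K] [Field L] [Fintype L]
    [Algebra F K] [Algebra F L] (hcard : Fintype.card L ≤ Fintype.card K)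
    {ℓ n : ℕ} (α : Fin n → ((Fin ℓ → F) →ₗ[F] F))
    (hK : ¬ ∃ x : Fin ℓ → K,
      ∀ m, (∑ i, algebraMap F K (α m (Pi.single i 1)) * x i) ≠ 0) :
    ¬ ∃ x : Fin ℓ → L,
      ∀ m, (∑ i, algebraMap F L (α m (Pi.single i 1)) * x i) ≠ 0 := by
  rintro ⟨x, hx⟩
  obtain ⟨f, hf⟩ :=
    finrank_le_iff_exists_linearMap.mp (finrank_le_finrank_of_card_le (F := F) hcard)
  refine hK ⟨f ∘ x, fun m => ?_⟩
  rw [Function.comp_def, ← f.map_sum_algebraMap_mul]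
  exact (map_ne_zero_iff f hf).mpr (hx m)

/-- Let `A` be a finite set of hyperplanes (kernels of nonzero linear forms) in `F_q^ℓ`,
and for a finite extension field `K` of `F_q` let `N(K)` count points of `K^ℓ` avoiding
all the extended hyperplanes.  If `N(K) = 0` then `N(L) = 0` for any extension `L` of
`F_q` with `#L ≤ #K` (i.e. `L = F_{q^j}` with `j ≤ k` where `K = F_{q^k}`). -/
theorem avoid_hyperplanes_smaller_extension
    {F K L : Type*} [Field F] [Fintype F] [Field K] [Fintype K] [Field L] [Fintype L]
    [Algebra F K] [Algebra F L] (hcard : Fintype.card L ≤ Fintype.card K)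
    {ℓ n : ℕ} (α : Fin n → ((Fin ℓ → F) →ₗ[F] F)) (hα : ∀ m, α m ≠ 0)
    (hK : ¬ ∃ x : Fin ℓ → K,
      ∀ m, (∑ i, algebraMap F K (α m (Pi.single i 1)) * x i) ≠ 0) :
    ¬ ∃ x : Fin ℓ → L,
      ∀ m, (∑ i, algebraMap F L (α m (Pi.single i 1)) * x i) ≠ 0 :=
  avoid_hyperplanes_smaller_extension_general hcard α hK
end

section
/- Let G be a finite simple graph on vertex set [ℓ] and let q be a prime power. For k ≥ 0, let N(k) be the number of tuples (v_1, ..., v_ℓ) ∈ (F_q^k)^ℓ such that for every clique {i_1, ..., i_p} of G, the vectors v_{i_1}, ..., v_{i_p} are linearly independent over F_q. Then N(k)/(q-1)^ℓ is an integer congruent to χ(G, k) modulo q - 1, where χ(G, k) is the number of proper colorings of G with k colors. -/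
set_option linter.unusedSectionVars false
set_option linter.unusedVariables false
set_option maxHeartbeats 1000000

namespace QGraphCountAux

open MulAction

variable {F : Type*} [Field F] [Fintype F] {ℓ k : ℕ}

def P (G : SimpleGraph (Fin ℓ)) (k : ℕ) (v : Fin ℓ → Fin k → F) : Prop :=
  ∀ s : Finset (Fin ℓ), G.IsClique ↑s → LinearIndependent F (fun i : s => v i)

def Mono (v : Fin ℓ → Fin k → F) : Prop :=
  ∀ i, ∃ (t : Fin k) (a : Fˣ), v i = Pi.single t (a : F)

def Proper (G : SimpleGraph (Fin ℓ)) (c : Fin ℓ → Fin k) : Prop :=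
  ∀ ⦃i j⦄, G.Adj i j → c i ≠ c j

instance : SMul ((Fin ℓ → Fˣ) × (Fin k → Fˣ)) (Fin ℓ → Fin k → F) :=
  ⟨fun g v i t => (g.1 i : F) * ((g.2 t : F) * v i t)⟩

lemma smul_apply (g : (Fin ℓ → Fˣ) × (Fin k → Fˣ)) (v : Fin ℓ → Fin k → F) (i : Fin ℓ)
    (t : Fin k) : (g • v) i t = (g.1 i : F) * ((g.2 t : F) * v i t) := rfl

instance : MulAction ((Fin ℓ → Fˣ) × (Fin k → Fˣ)) (Fin ℓ → Fin k → F) where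
  one_smul v := by funext i t; simp [smul_apply]
  mul_smul g h v := by
    funext i t
    simp only [smul_apply, Prod.fst_mul, Prod.snd_mul, Pi.mul_apply, Units.val_mul]
    ring

def diagLE (d : Fin k → Fˣ) : (Fin k → F) ≃ₗ[F] (Fin k → F) :=
  LinearEquiv.piCongrRight fun t => LinearEquiv.smulOfUnit (d t)

lemma diagLE_apply (d : Fin k → Fˣ) (x : Fin k → F) (t : Fin k) :
    diagLE d x t = (d t : F) * x t := rfl

lemma P.smul {G : SimpleGraph (Fin ℓ)} {v : Fin ℓ → Fin k → F} (hv : P G k v)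
    (g : (Fin ℓ → Fˣ) × (Fin k → Fˣ)) : P G k (g • v) := by
  intro s hs
  have h1 := ((hv s hs).map' (diagLE g.2 : (Fin k → F) →ₗ[F] (Fin k → F))
    (LinearEquiv.ker _)).units_smul (fun i : s => g.1 i)
  have h2 : ((fun i : s => g.1 i) • ((diagLE g.2 : (Fin k → F) →ₗ[F] (Fin k → F)) ∘
      fun i : s => v i)) = fun i : s => (g • v) i := by
    funext i
    funext t
    simp [Pi.smul_apply', smul_apply, diagLE_apply, Units.smul_def]
  rwa [h2] at h1

lemma Mono.smul {v : Fin ℓ → Fin k → F} (hv : Mono v) (g : (Fin ℓ → Fˣ) × (Fin k → Fˣ)) :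
    Mono (g • v) := by
  intro i
  obtain ⟨t, a, ha⟩ := hv i
  refine ⟨t, g.1 i * g.2 t * a, ?_⟩
  funext u
  by_cases hu : u = t
  · subst hu; simp [smul_apply, ha]; ring
  · simp [smul_apply, ha, Pi.single_eq_of_ne hu]

lemma P.ne_zero' {G : SimpleGraph (Fin ℓ)} {v : Fin ℓ → Fin k → F} (hv : P G k v)
    (i : Fin ℓ) : v i ≠ 0 := by
  have h := hv {i} (by simp)
  have h2 := h.ne_zero ⟨i, by simp⟩
  simpa using h2

lemma pair_dep {v : Fin ℓ → Fin k → F} {i j : Fin ℓ} (hij : i ≠ j)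
    (h : LinearIndependent F (fun x : ({i, j} : Finset (Fin ℓ)) => v x))
    {t : Fin k} {a b : F} (ha : a ≠ 0) (hb : b ≠ 0)
    (hi : v i = Pi.single t a) (hj : v j = Pi.single t b) : False := by
  classical
  have hmi : i ∈ ({i, j} : Finset (Fin ℓ)) := by simp
  have hmj : j ∈ ({i, j} : Finset (Fin ℓ)) := by simp
  have he : Function.Injective
      (fun x : Bool => if x then (⟨i, hmi⟩ : ({i, j} : Finset (Fin ℓ))) else ⟨j, hmj⟩) := by
    intro x y hxy
    cases x <;> cases y
    · rfl
    · exfalso; apply hij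
      have h5 := congrArg Subtype.val hxy
      simpa using h5.symm
    · exfalso; apply hij
      have h5 := congrArg Subtype.val hxy
      simpa using h5
    · rfl
  have h2 := h.comp _ he
  have hsum : ∑ x : Bool, (if x then b else -a) •
      ((fun x : ({i, j} : Finset (Fin ℓ)) => v x) ∘
        (fun x : Bool => if x then (⟨i, hmi⟩ : ({i, j} : Finset (Fin ℓ))) else ⟨j, hmj⟩)) x = 0 := by
    rw [Fintype.sum_bool]
    show b • v i + (-a) • v j = 0
    rw [hi, hj]
    funext u
    by_cases hu : u = t
    · subst hu; simp [Pi.single_eq_same]; ring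
    · simp [Pi.single_eq_of_ne hu]
  have h3 := Fintype.linearIndependent_iff.mp h2 (fun x => if x then b else -a) hsum true
  simp at h3
  exact hb h3

lemma exists_two {G : SimpleGraph (Fin ℓ)} {v : Fin ℓ → Fin k → F} (hP : P G k v)
    (hm : ¬ Mono v) :
    ∃ (i : Fin ℓ) (t₁ t₂ : Fin k), t₁ ≠ t₂ ∧ v i t₁ ≠ 0 ∧ v i t₂ ≠ 0 := by
  classical
  rw [Mono, not_forall] at hm
  obtain ⟨i, hi⟩ := hm
  push_neg at hi
  have h0 := hP.ne_zero' i
  obtain ⟨t₁, ht₁⟩ : ∃ t, v i t ≠ 0 := by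
    by_contra hc; push_neg at hc; exact h0 (funext hc)
  refine ⟨i, t₁, ?_⟩
  by_contra hc
  push_neg at hc
  apply hi t₁ (Units.mk0 _ ht₁)
  funext u
  by_cases hu : u = t₁
  · subst hu; simp
  · have := hc u (fun h => hu h.symm) ht₁
    simp [Pi.single_eq_of_ne hu, this]

def XrSet (G : SimpleGraph (Fin ℓ)) (k : ℕ) :
    SubMulAction ((Fin ℓ → Fˣ) × (Fin k → Fˣ)) (Fin ℓ → Fin k → F) where
  carrier := {v | P G k v ∧ ¬ Mono v}
  smul_mem' := by
    intro g v hv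
    refine ⟨hv.1.smul g, fun hm => hv.2 ?_⟩
    have h2 := hm.smul g⁻¹
    rwa [inv_smul_smul] at h2

lemma stab_key {G : SimpleGraph (Fin ℓ)} (x : ↥(XrSet (F := F) G k))
    {g : (Fin ℓ → Fˣ) × (Fin k → Fˣ)}
    (hg : g ∈ stabilizer ((Fin ℓ → Fˣ) × (Fin k → Fˣ)) x)
    {i : Fin ℓ} {t : Fin k} (hvt : (x : Fin ℓ → Fin k → F) i t ≠ 0) :
    (g.1 i : F) * g.2 t = 1 := by
  have h1 : g • (x : Fin ℓ → Fin k → F) = (x : Fin ℓ → Fin k → F) := by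
    have := congrArg Subtype.val (mem_stabilizer_iff.mp hg)
    rwa [SubMulAction.val_smul] at this
  have h2 := congrFun (congrFun h1 i) t
  rw [smul_apply] at h2
  have h3 : ((g.1 i : F) * g.2 t) * (x : Fin ℓ → Fin k → F) i t
      = 1 * (x : Fin ℓ → Fin k → F) i t := by rw [one_mul, mul_assoc]; exact h2
  exact mul_right_cancel₀ hvt h3

lemma stab_dvd (G : SimpleGraph (Fin ℓ)) (x : ↥(XrSet (F := F) G k)) :
    Nat.card Fˣ * Nat.card (stabilizer ((Fin ℓ → Fˣ) × (Fin k → Fˣ)) x)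
      ∣ Nat.card Fˣ ^ k := by
  classical
  obtain ⟨i0, t₁, t₂, hne, h1, h2⟩ := exists_two x.2.1 x.2.2
  set Γ := (Fin ℓ → Fˣ) × (Fin k → Fˣ) with hΓ
  set φ₀ : (Fin k → Fˣ) →* Fˣ := MonoidHom.mk' (fun d => d t₁ * (d t₂)⁻¹)
    (by
      intro a b
      simp only [Pi.mul_apply, mul_inv]
      exact mul_mul_mul_comm _ _ _ _) with hφ₀
  set ψ : (stabilizer Γ x) →* (Fin k → Fˣ) :=
    (MonoidHom.snd _ _).comp (stabilizer Γ x).subtype with hψ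
  have hψinj : Function.Injective ψ := by
    intro g h hgh
    have hsnd : (g : Γ).2 = (h : Γ).2 := hgh
    apply Subtype.ext
    apply Prod.ext _ hsnd
    funext i
    obtain ⟨t, ht⟩ : ∃ t, (x : Fin ℓ → Fin k → F) i t ≠ 0 := by
      by_contra hc; push_neg at hc
      exact (P.ne_zero' x.2.1 i) (funext hc)
    have e1 := stab_key x g.2 ht
    have e2 := stab_key x h.2 ht
    rw [hsnd] at e1
    apply Units.ext
    have hbne : ((h : Γ).2 t : F) ≠ 0 := Units.ne_zero _
    exact mul_right_cancel₀ hbne (e1.trans e2.symm)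
  have hrange : ψ.range ≤ φ₀.ker := by
    rintro d ⟨g, rfl⟩
    have e1 := stab_key x g.2 h1
    have e2 := stab_key x g.2 h2
    have e3 : ((g : Γ).2 t₁ : F) = (g : Γ).2 t₂ := by
      have hane : ((g : Γ).1 i0 : F) ≠ 0 := Units.ne_zero _
      exact mul_left_cancel₀ hane (e1.trans e2.symm)
    have e4 : (g : Γ).2 t₁ = (g : Γ).2 t₂ := Units.ext e3
    simp only [MonoidHom.mem_ker, hφ₀, MonoidHom.mk'_apply]
    rw [show ψ g t₁ = (g : Γ).2 t₁ from rfl, show ψ g t₂ = (g : Γ).2 t₂ from rfl, e4,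
      mul_inv_cancel]
  have hsurj : Function.Surjective φ₀ := by
    intro u
    refine ⟨Function.update 1 t₁ u, ?_⟩
    simp only [hφ₀, MonoidHom.mk'_apply]
    rw [Function.update_self, Function.update_of_ne (Ne.symm hne)]
    simp
  have e1 : Nat.card ((Fin k → Fˣ) ⧸ φ₀.ker) = Nat.card Fˣ := by
    rw [Nat.card_congr (QuotientGroup.quotientKerEquivRange φ₀).toEquiv,
      MonoidHom.range_eq_top_of_surjective φ₀ hsurj,
      Nat.card_congr Subgroup.topEquiv.toEquiv]
  have e2 := Subgroup.card_eq_card_quotient_mul_card_subgroup φ₀.ker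
  have e3 : Nat.card (Fin k → Fˣ) = Nat.card Fˣ ^ k := by
    rw [Nat.card_fun, Nat.card_eq_fintype_card (α := Fin k), Fintype.card_fin]
  have e4 : Nat.card Fˣ ^ k = Nat.card Fˣ * Nat.card φ₀.ker := by
    rw [← e3, e2, e1]
  rw [e4]
  apply mul_dvd_mul_left
  have hcs : Nat.card (stabilizer Γ x) = Nat.card ψ.range :=
    Nat.card_congr (MonoidHom.ofInjective hψinj).toEquiv
  rw [hcs]
  exact Subgroup.card_dvd_of_le hrange

lemma orbit_dvd (G : SimpleGraph (Fin ℓ)) (x : ↥(XrSet (F := F) G k)) :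
    (Nat.card Fˣ) ^ (ℓ + 1) ∣ Nat.card (orbit ((Fin ℓ → Fˣ) × (Fin k → Fˣ)) x) := by
  classical
  set Γ := (Fin ℓ → Fˣ) × (Fin k → Fˣ) with hΓ
  have horb : Nat.card (orbit Γ x) * Nat.card (stabilizer Γ x) = Nat.card Γ := by
    rw [Nat.card_congr (orbitEquivQuotientStabilizer Γ x)]
    exact (Subgroup.card_eq_card_quotient_mul_card_subgroup _).symm
  have hΓcard : Nat.card Γ = Nat.card Fˣ ^ ℓ * Nat.card Fˣ ^ k := by
    rw [Nat.card_prod, Nat.card_fun, Nat.card_fun, Nat.card_eq_fintype_card (α := Fin ℓ),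
      Nat.card_eq_fintype_card (α := Fin k), Fintype.card_fin, Fintype.card_fin]
  obtain ⟨m, hm⟩ := stab_dvd G x
  have hs : 0 < Nat.card (stabilizer Γ x) := Nat.card_pos
  refine ⟨m, ?_⟩
  have hmul : Nat.card (orbit Γ x) * Nat.card (stabilizer Γ x)
      = (Nat.card Fˣ ^ (ℓ + 1) * m) * Nat.card (stabilizer Γ x) := by
    rw [horb, hΓcard]
    calc Nat.card Fˣ ^ ℓ * Nat.card Fˣ ^ k
        = Nat.card Fˣ ^ ℓ * (Nat.card Fˣ * Nat.card (stabilizer Γ x) * m) := by rw [← hm]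
      _ = Nat.card Fˣ ^ (ℓ + 1) * m * Nat.card (stabilizer Γ x) := by ring
  exact Nat.eq_of_mul_eq_mul_right hs hmul

lemma xr_dvd (G : SimpleGraph (Fin ℓ)) (k : ℕ) :
    (Nat.card Fˣ) ^ (ℓ + 1) ∣ Nat.card ↥(XrSet (F := F) G k) := by
  classical
  set Γ := (Fin ℓ → Fˣ) × (Fin k → Fˣ) with hΓ
  haveI : Fintype ↥(XrSet (F := F) G k) := Fintype.ofFinite _
  haveI : Fintype (orbitRel.Quotient Γ ↥(XrSet (F := F) G k)) := Fintype.ofFinite _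
  haveI : ∀ ω : orbitRel.Quotient Γ ↥(XrSet (F := F) G k), Fintype ↥(orbit Γ ω.out) :=
    fun ω => Fintype.ofFinite _
  rw [Nat.card_eq_fintype_card (α := ↥(XrSet (F := F) G k)),
    Fintype.card_congr (selfEquivSigmaOrbits Γ ↥(XrSet (F := F) G k)), Fintype.card_sigma]
  refine Finset.dvd_sum ?_
  intro ω _
  rw [← Nat.card_eq_fintype_card]
  exact orbit_dvd G ω.out

lemma isClique_pair_finset {G : SimpleGraph (Fin ℓ)} {i j : Fin ℓ} (h : G.Adj i j) :
    G.IsClique (↑({i, j} : Finset (Fin ℓ))) := by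
  rw [Finset.coe_insert, Finset.coe_singleton]
  exact SimpleGraph.isClique_pair.mpr fun _ => h

def σmap (α : Fin ℓ → Fˣ) (c : Fin ℓ → Fin k) : Fin ℓ → Fin k → F :=
  fun i => Pi.single (c i) ((α i : F))

lemma σmap_P {G : SimpleGraph (Fin ℓ)} {c : Fin ℓ → Fin k} (hc : Proper G c)
    (α : Fin ℓ → Fˣ) : P G k (σmap (F := F) α c) := by
  intro s hs
  have hinj : Function.Injective (fun i : s => c i) := by
    intro x y hxy
    by_contra hne
    have hxy' : (x : Fin ℓ) ≠ (y : Fin ℓ) := fun h => hne (Subtype.ext h)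
    exact hc (hs (Finset.mem_coe.mpr x.2) (Finset.mem_coe.mpr y.2) hxy') hxy
  have base := (Pi.basisFun F (Fin k)).linearIndependent.comp (fun i : s => c i) hinj
  have h2 := base.units_smul (fun i : s => α i)
  have h3 : ((fun i : s => α i) • (⇑(Pi.basisFun F (Fin k)) ∘ (fun i : s => c i)))
      = fun i : s => σmap (F := F) α c i := by
    funext i
    rw [Pi.smul_apply', Function.comp_apply, Pi.basisFun_apply]
    funext u
    by_cases hu : u = c i
    · subst hu; simp [σmap, Units.smul_def]
    · simp [σmap, Pi.single_eq_of_ne hu]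
  rwa [h3] at h2

lemma sigma_bij (G : SimpleGraph (Fin ℓ)) (k : ℕ) :
    Nat.card {v : Fin ℓ → Fin k → F // P G k v ∧ Mono v}
      = Nat.card Fˣ ^ ℓ * Nat.card {c : Fin ℓ → Fin k // Proper G c} := by
  classical
  have hb : Function.Bijective (fun p : (Fin ℓ → Fˣ) × {c : Fin ℓ → Fin k // Proper G c} =>
      (⟨σmap p.1 p.2.1, σmap_P p.2.2 p.1, fun i => ⟨p.2.1 i, p.1 i, rfl⟩⟩ :
        {v : Fin ℓ → Fin k → F // P G k v ∧ Mono v})) := by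
    constructor
    · rintro ⟨α, c, hc⟩ ⟨α', c', hc'⟩ hp
      have h1 : σmap (F := F) α c = σmap α' c' := congrArg Subtype.val hp
      have h2 : ∀ i, c i = c' i ∧ α i = α' i := by
        intro i
        have h4 := congrFun (congrFun h1 i) (c i)
        by_cases hci : c' i = c i
        · refine ⟨hci.symm, Units.ext ?_⟩
          have h4' : (α i : F) = (Pi.single (c' i) ((α' i : F)) : Fin k → F) (c i) := by
            simpa [σmap, Pi.single_eq_same] using h4
          rwa [hci, Pi.single_eq_same] at h4'
        · exfalso
          have h5 : (α i : F) = 0 := by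
            simpa [σmap, Pi.single_eq_same, Pi.single_eq_of_ne (fun h => hci h.symm)] using h4
          exact Units.ne_zero (α i) h5
      have hc2 : c = c' := funext fun i => (h2 i).1
      have ha2 : α = α' := funext fun i => (h2 i).2
      subst hc2; subst ha2; rfl
    · rintro ⟨v, hvp⟩
      have hP := hvp.1
      have hM := hvp.2
      choose t a hv using hM
      have hProper : Proper G t := by
        intro i j hadj heq
        exact pair_dep hadj.ne (hP {i, j} (isClique_pair_finset hadj))
          (Units.ne_zero (a i)) (Units.ne_zero (a j)) (hv i) (heq ▸ hv j)
      exact ⟨(a, ⟨t, hProper⟩), Subtype.ext (funext fun i => (hv i).symm)⟩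
  rw [← Nat.card_congr (Equiv.ofBijective _ hb), Nat.card_prod, Nat.card_fun,
    Nat.card_eq_fintype_card (α := Fin ℓ), Fintype.card_fin]

lemma card_split (G : SimpleGraph (Fin ℓ)) (k : ℕ) :
    Nat.card {v : Fin ℓ → Fin k → F // P G k v}
      = Nat.card {v : Fin ℓ → Fin k → F // P G k v ∧ Mono v}
      + Nat.card {v : Fin ℓ → Fin k → F // P G k v ∧ ¬ Mono v} := by
  classical
  rw [← Nat.card_sum]
  apply Nat.card_congr
  calc {v : Fin ℓ → Fin k → F // P G k v}
      ≃ {x : {v : Fin ℓ → Fin k → F // P G k v} // Mono x.1}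
        ⊕ {x : {v : Fin ℓ → Fin k → F // P G k v} // ¬ Mono x.1} :=
        (Equiv.sumCompl _).symm
    _ ≃ _ := Equiv.sumCongr
        (Equiv.subtypeSubtypeEquivSubtypeInter (fun v => P G k v) (fun v => Mono v))
        (Equiv.subtypeSubtypeEquivSubtypeInter (fun v => P G k v) (fun v => ¬ Mono v))

lemma xr_card (G : SimpleGraph (Fin ℓ)) (k : ℕ) :
    Nat.card {v : Fin ℓ → Fin k → F // P G k v ∧ ¬ Mono v}
      = Nat.card ↥(XrSet (F := F) G k) :=
  Nat.card_congr (Equiv.subtypeEquivRight fun v => Iff.rfl)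

lemma card_colorings (G : SimpleGraph (Fin ℓ)) (k : ℕ) :
    Nat.card (G.Coloring (Fin k)) = Nat.card {c : Fin ℓ → Fin k // Proper G c} := by
  apply Nat.card_congr
  exact ⟨fun C => ⟨C, fun i j h => C.valid h⟩,
    fun c => SimpleGraph.Coloring.mk c.1 (fun {i j} h => c.2 h),
    fun C => rfl, fun c => rfl⟩

end QGraphCountAux

/-- Let `G` be a graph on `[ℓ]`, `q` a prime power, and `N(k)` the number of tuples
`(v₁, …, v_ℓ) ∈ (F_q^k)^ℓ` such that the vectors indexed by every clique of `G` are
linearly independent.  Then `N(k)/(q-1)^ℓ` is an integer congruent to `χ(G,k)`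
modulo `q-1`. -/
theorem qGraphical_count_mod {F : Type*} [Field F] [Fintype F]
    (q : ℕ) (hq : q = Fintype.card F) {ℓ : ℕ} (G : SimpleGraph (Fin ℓ)) (k : ℕ)
    (N : ℕ)
    (hN : N = Nat.card {v : Fin ℓ → (Fin k → F) //
      ∀ s : Finset (Fin ℓ), G.IsClique ↑s → LinearIndependent F (fun i : s => v i)}) :
    (q - 1) ^ ℓ ∣ N ∧
      N / (q - 1) ^ ℓ ≡ Nat.card (G.Coloring (Fin k)) [MOD q - 1] := by
  classical
  have hq1 : q - 1 = Nat.card Fˣ := by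
    rw [Nat.card_units, hq, Nat.card_eq_fintype_card]
  set n := Nat.card Fˣ with hn
  obtain ⟨D, hD⟩ := QGraphCountAux.xr_dvd (F := F) G k
  have hsplit : N = n ^ ℓ
      * (Nat.card {c : Fin ℓ → Fin k // QGraphCountAux.Proper G c} + n * D) := by
    have h0 : N = Nat.card {v : Fin ℓ → Fin k → F // QGraphCountAux.P G k v} := hN
    rw [h0, QGraphCountAux.card_split G k, QGraphCountAux.sigma_bij G k,
      QGraphCountAux.xr_card G k, hD]
    ring
  have hnpos : 0 < n := Nat.card_pos
  constructor
  · rw [hq1, hsplit]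
    exact dvd_mul_right _ _
  · rw [hq1, hsplit, Nat.mul_div_cancel_left _ (pow_pos hnpos ℓ),
      QGraphCountAux.card_colorings G k]
    show (Nat.card {c : Fin ℓ → Fin k // QGraphCountAux.Proper G c} + n * D) % n
      = Nat.card {c : Fin ℓ → Fin k // QGraphCountAux.Proper G c} % n
    exact Nat.add_mul_mod_self_left _ n D
end

section
/- For a prime power q, integers ℓ ≥ 4 and k ≥ 1, the number of tuples (v_1, ..., v_ℓ) ∈ (F_q^k)^ℓ such that each v_i is nonzero and v_i, v_{i+1} are linearly independent over F_q for all i (indices mod ℓ, so including the pair v_ℓ, v_1) equals (q^k - q)^ℓ + (-1)^ℓ (q-1)^{ℓ-1} (q^k - q). -/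
/-!
A nonzero vector of `F^k` is a point of `ℙ(F^k)` together with a unit of `F`, and two nonzero
vectors are linearly independent exactly when their points differ. The count is therefore
`(q - 1)^ℓ` times the number of proper colourings of the `ℓ`-cycle by the `N` points of `ℙ(F^k)`.
Closed walks are counted by traces of matrix powers, so with `J` the all-ones matrix that number
is `tr (J - 1)^ℓ = (N - 1)^ℓ + (-1)^ℓ (N - 1)`, and `(N - 1)(q - 1) = q^k - q`.
-/

open Matrix
open scoped LinearAlgebra.Projectivization

theorem Matrix.pow_succ_apply_eq_sum_prod {α R : Type*} [Fintype α] [DecidableEq α]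
    [CommSemiring R] (M : Matrix α α R) (n : ℕ) (a b : α) :
    (M ^ (n + 1)) a b = ∑ p : Fin n → α, ∏ i : Fin (n + 1),
      M ((Fin.cons a p : Fin (n + 1) → α) i) ((Fin.snoc p b : Fin (n + 1) → α) i) := by
  induction n generalizing a with
  | zero => simp [Fin.snoc]
  | succ n ih =>
    rw [pow_succ', mul_apply, ← (Fin.consEquiv fun _ => α).sum_comp, Fintype.sum_prod_type]
    simp only [Fin.consEquiv, Equiv.coe_fn_mk, ← Fin.cons_snoc_eq_snoc_cons, ih, Finset.mul_sum,
      Fin.prod_univ_succ (n := n + 1), Fin.cons_zero, Fin.cons_succ]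

theorem Matrix.trace_pow_succ_eq_sum_prod {α R : Type*} [Fintype α] [DecidableEq α]
    [CommSemiring R] (M : Matrix α α R) (n : ℕ) :
    trace (M ^ (n + 1)) = ∑ v : Fin (n + 1) → α, ∏ i, M (v i) (v (i + 1)) := by
  rw [← (Fin.consEquiv fun _ => α).sum_comp, Fintype.sum_prod_type, trace]
  simp only [diag_apply, pow_succ_apply_eq_sum_prod, Fin.snoc_eq_cons_rotate, finRotate_apply,
    Fin.consEquiv, Equiv.coe_fn_mk]

theorem natCast_card_cyclic_eq_trace_pow {α R : Type*} [Fintype α] [DecidableEq α]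
    [CommSemiring R] (r : α → α → Prop) [DecidableRel r] (ℓ : ℕ) [NeZero ℓ] :
    (Nat.card {v : ZMod ℓ → α // ∀ i, r (v i) (v (i + 1))} : R) =
      trace ((of fun a b => if r a b then 1 else 0 : Matrix α α R) ^ ℓ) := by
  obtain ⟨n, rfl⟩ := Nat.exists_eq_add_one_of_ne_zero (NeZero.ne ℓ)
  rw [trace_pow_succ_eq_sum_prod]
  simp only [of_apply, Finset.prod_boole, Finset.mem_univ, true_implies]
  rw [Finset.sum_boole, ← Fintype.card_subtype, ← Nat.card_eq_fintype_card]
  rfl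

section AllOnes

variable {α R : Type*} [Fintype α] [DecidableEq α] [CommRing R]

local notation "J" => (of fun _ _ => 1 : Matrix α α R)

omit [DecidableEq α] in
theorem Matrix.of_one_mul_of_one : J * J = (Fintype.card α : R) • J := by
  ext a b
  simp [mul_apply]

-- `c = ((N - 1)^m - (-1)^m) / N`, stated without dividing by `N = card α`.
theorem Matrix.exists_of_one_sub_one_pow (m : ℕ) :
    ∃ c : R, (J - 1) ^ m = c • J + (-1 : R) ^ m • 1 ∧
      (Fintype.card α : R) * c = (Fintype.card α - 1) ^ m - (-1) ^ m := by
  induction m with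
  | zero => exact ⟨0, by simp⟩
  | succ m ih =>
    obtain ⟨c, hpow, hc⟩ := ih
    refine ⟨(Fintype.card α - 1) * c + (-1) ^ m, ?_,
      by linear_combination (Fintype.card α - 1 : R) * hc⟩
    rw [pow_succ, hpow]
    simp only [mul_sub, add_mul, smul_mul_assoc, of_one_mul_of_one, one_mul, mul_one]
    module

theorem Matrix.trace_of_one_sub_one_pow (m : ℕ) :
    trace ((J - 1) ^ m) = ((Fintype.card α : R) - 1) ^ m + (-1) ^ m * (Fintype.card α - 1) := by
  obtain ⟨c, hpow, hc⟩ := exists_of_one_sub_one_pow (α := α) (R := R) m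
  rw [hpow, trace_add, trace_smul, trace_smul, trace_one]
  simp only [trace, diag_apply, of_apply, Finset.sum_const, Finset.card_univ, nsmul_eq_mul,
    mul_one, smul_eq_mul]
  linear_combination hc

end AllOnes

theorem natCast_card_cycle_colorings {β R : Type*} [Finite β] [CommRing R] (ℓ : ℕ) [NeZero ℓ] :
    (Nat.card {c : ZMod ℓ → β // ∀ i, c i ≠ c (i + 1)} : R) =
      ((Nat.card β : R) - 1) ^ ℓ + (-1) ^ ℓ * ((Nat.card β : R) - 1) := by
  classical
  have := Fintype.ofFinite β
  have hA : (of fun a b => if a ≠ b then 1 else 0 : Matrix β β R) = of (fun _ _ => 1) - 1 := by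
    ext a b
    by_cases h : a = b <;> simp [h, one_apply]
  rw [natCast_card_cyclic_eq_trace_pow, hA, trace_of_one_sub_one_pow, Nat.card_eq_fintype_card]

theorem Nat.card_subtype_comp_fst_equiv {ι α β γ : Type*} [Finite ι] (e : α ≃ β × γ)
    (P : (ι → β) → Prop) :
    Nat.card {v : ι → α // P fun i => (e (v i)).1} =
      Nat.card {c : ι → β // P c} * Nat.card γ ^ Nat.card ι := by
  rw [← Nat.card_fun, ← Nat.card_prod]
  exact Nat.card_congr <|
    ((Equiv.refl ι).arrowCongr e |>.trans (Equiv.arrowProdEquivProdArrow _ _ _)).subtypeEquiv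
      (fun _ => Iff.rfl) |>.trans Equiv.prodSubtypeFstEquivSubtypeProd

open Projectivization in
theorem Projectivization.linearIndependent_pair_iff_mk_ne {F V : Type*} [Field F]
    [AddCommGroup V] [Module F V] {u v : V} (hu : u ≠ 0) (hv : v ≠ 0) :
    LinearIndependent F ![u, v] ↔ mk F u hu ≠ mk F v hv :=
  (independent_mk_iff_LinearIndependent hu hv).symm.trans (independent_pair_iff_ne _ _)

open Projectivization in
theorem Projectivization.natCard_linearIndependent_pairs {F V ι : Type*} [Field F]
    [AddCommGroup V] [Module F V] [Finite ι] (s : ι → ι) :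
    Nat.card {v : ι → V // (∀ i, v i ≠ 0) ∧ ∀ i, LinearIndependent F ![v i, v (s i)]} =
      Nat.card {c : ι → ℙ F V // ∀ i, c i ≠ c (s i)} * (Nat.card F - 1) ^ Nat.card ι := by
  let e : {v : ι → V // (∀ i, v i ≠ 0) ∧ ∀ i, LinearIndependent F ![v i, v (s i)]} ≃
      {w : ι → {x : V // x ≠ 0} // ∀ i, mk F _ (w i).2 ≠ mk F _ (w (s i)).2} :=
    { toFun := fun v => ⟨fun i => ⟨v.1 i, v.2.1 i⟩,
        fun i => (linearIndependent_pair_iff_mk_ne _ _).mp (v.2.2 i)⟩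
      invFun := fun w => ⟨fun i => w.1 i, fun i => (w.1 i).2,
        fun i => (linearIndependent_pair_iff_mk_ne _ _).mpr (w.2 i)⟩ }
  rw [Nat.card_congr e, ← Nat.card_units]
  exact Nat.card_subtype_comp_fst_equiv (nonZeroEquivProjectivizationProdUnits F V)
    (fun c => ∀ i, c i ≠ c (s i))

theorem qGraphical_count_cycle_general {F : Type*} [Field F] [Fintype F]
    (q : ℕ) (hq : q = Fintype.card F) (ℓ k : ℕ)
    [NeZero ℓ] :
    (Nat.card {v : ZMod ℓ → (Fin k → F) //
        (∀ i, v i ≠ 0) ∧ ∀ i, LinearIndependent F ![v i, v (i + 1)]} : ℤ) =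
      ((q : ℤ) ^ k - q) ^ ℓ + (-1) ^ ℓ * ((q : ℤ) - 1) ^ (ℓ - 1) * ((q : ℤ) ^ k - q) := by
  have hF : Nat.card F = q := hq ▸ Nat.card_eq_fintype_card
  have hq1 : 1 ≤ q := hF ▸ Nat.card_pos
  have hqk : (q : ℤ) ^ k - q = (Nat.card (ℙ F (Fin k → F)) - 1) * (q - 1) := by
    have hpoints := Projectivization.card F (Fin k → F)
    rw [Nat.card_fun, Nat.card_fin, hF] at hpoints
    have : ((q ^ k - 1 : ℕ) : ℤ) = Nat.card (ℙ F (Fin k → F)) * (q - 1 : ℕ) :=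
      congrArg _ hpoints
    push_cast [Nat.one_le_pow _ _ hq1, hq1] at this
    linear_combination this
  obtain ⟨n, rfl⟩ := Nat.exists_eq_add_one_of_ne_zero (NeZero.ne ℓ)
  rw [Projectivization.natCard_linearIndependent_pairs, Nat.cast_mul,
    natCast_card_cycle_colorings, Nat.card_zmod, hF, hqk, mul_pow, Nat.add_sub_cancel]
  push_cast [hq1]
  ring

/-- For `ℓ ≥ 4` and `k ≥ 1`, the number of tuples `(v₁, …, v_ℓ)` of nonzero vectors
in `F_q^k`, indexed cyclically, with cyclically consecutive vectors linearly
independent, equals `(q^k - q)^ℓ + (-1)^ℓ (q-1)^{ℓ-1} (q^k - q)`. -/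
theorem qGraphical_count_cycle {F : Type*} [Field F] [Fintype F]
    (q : ℕ) (hq : q = Fintype.card F) (ℓ k : ℕ) (hℓ : 4 ≤ ℓ) (hk : 1 ≤ k)
    [NeZero ℓ] :
    (Nat.card {v : ZMod ℓ → (Fin k → F) //
        (∀ i, v i ≠ 0) ∧ ∀ i, LinearIndependent F ![v i, v (i + 1)]} : ℤ) =
      ((q : ℤ) ^ k - q) ^ ℓ + (-1) ^ ℓ * ((q : ℤ) - 1) ^ (ℓ - 1) * ((q : ℤ) ^ k - q) :=
  qGraphical_count_cycle_general q hq ℓ k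
end

section
/- A finite simple graph G is chordal if and only if G admits a perfect elimination ordering. -/
/-!
If `r` ranks the vertices so that lower-ranked neighbours always form a clique, then no induced
cycle of length at least 4 exists: its top-ranked vertex would have two non-adjacent lower-ranked
neighbours. Conversely, Dirac's lemma says that a finite chordal graph is complete or has two
non-adjacent simplicial vertices; ranking a simplicial vertex last and recursing on the rest gives
a perfect elimination ordering. Dirac's lemma goes by induction on the number of vertices: for
non-adjacent `v`, `w` let `C` be the component of `w` in `G - N[v]` and `S` the set of outside
neighbours of `C`. Then `S ⊆ N(v)`, and `S` is a clique, because a shortest path through `C`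
between two non-adjacent vertices of `S` closes up with `v` into an induced cycle of length at
least 4. Induction on `G[C ∪ S]` and on `G - C` then yields a simplicial vertex in `C` and one
outside `C ∪ S`, and these are non-adjacent.
-/

/-- A graph is chordal if every cycle of length at least `4` has a chord;
equivalently, it contains no induced cycle of length at least `4`. -/
def IsChordal {ℓ : ℕ} (G : SimpleGraph (Fin ℓ)) : Prop :=
  ∀ n : ℕ, 4 ≤ n → IsEmpty (SimpleGraph.cycleGraph n ↪g G)

/-- An ordering `σ 0, σ 1, …` of the vertices is a perfect elimination ordering if
for each `i`, the earlier neighbors of `σ i` form a clique. -/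
def IsPerfectEliminationOrdering {ℓ : ℕ} (G : SimpleGraph (Fin ℓ))
    (σ : Equiv.Perm (Fin ℓ)) : Prop :=
  ∀ i : Fin ℓ, G.IsClique {u | ∃ j : Fin ℓ, j < i ∧ u = σ j ∧ G.Adj (σ j) (σ i)}

open Function

namespace SimpleGraph

variable {V W α : Type*} {G : SimpleGraph V}

def Chordal (G : SimpleGraph V) : Prop :=
  ∀ n : ℕ, 4 ≤ n → IsEmpty (cycleGraph n ↪g G)

def IsSimplicial (G : SimpleGraph V) (v : V) : Prop :=
  G.IsClique (G.neighborSet v)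

def IsPerfectEliminationRank [LT α] (G : SimpleGraph V) (r : V → α) : Prop :=
  ∀ x, G.IsClique {y | r y < r x ∧ G.Adj y x}

theorem cycleGraph_adj_iff_val {n : ℕ} {u v : Fin (n + 2)} :
    (cycleGraph (n + 2)).Adj u v ↔ u.val + 1 = v.val ∨ v.val + 1 = u.val ∨
      (u.val = 0 ∧ v.val = n + 1) ∨ (v.val = 0 ∧ u.val = n + 1) := by
  rw [cycleGraph_adj']
  rcases lt_trichotomy u v with h | rfl | h
  · rw [Fin.coe_sub_iff_lt.2 h, Fin.coe_sub_iff_le.2 h.le]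
    rw [Fin.lt_def] at h
    omega
  · simp only [sub_self, Fin.val_zero]
    omega
  · rw [Fin.coe_sub_iff_lt.2 h, Fin.coe_sub_iff_le.2 h.le]
    rw [Fin.lt_def] at h
    omega

theorem exists_adj_adj_not_adj_cycleGraph {n : ℕ} (hn : 4 ≤ n) (k : Fin n) :
    ∃ a b, (cycleGraph n).Adj a k ∧ (cycleGraph n).Adj b k ∧ a ≠ b ∧
      ¬ (cycleGraph n).Adj a b := by
  obtain ⟨m, rfl⟩ : ∃ m, n = m + 1 + 1 := ⟨n - 2, by omega⟩
  refine ⟨k - 1, k + 1, ?_⟩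
  simp only [cycleGraph_adj_iff_val, ne_eq, Fin.ext_iff, Fin.val_add_one, Fin.coe_sub_one,
    Fin.val_last, Fin.val_zero]
  split_ifs <;> simp only [true_and, and_true, false_and, and_false, or_false, false_or,
    not_false_eq_true, not_true_eq_false, true_or, or_true] <;> omega

theorem cycleGraph_adj_castSucc {n : ℕ} {i j : Fin (n + 1)} :
    (cycleGraph (n + 2)).Adj i.castSucc j.castSucc ↔ (pathGraph (n + 1)).Adj i j := by
  simp only [cycleGraph_adj_iff_val, pathGraph_adj, Fin.val_castSucc]
  omega

theorem cycleGraph_adj_last_castSucc {n : ℕ} {i : Fin (n + 1)} :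
    (cycleGraph (n + 2)).Adj (Fin.last (n + 1)) i.castSucc ↔ i = 0 ∨ i = Fin.last n := by
  simp only [cycleGraph_adj_iff_val, Fin.val_last, Fin.val_castSucc, Fin.ext_iff, Fin.val_zero,
    and_true]
  omega

theorem cycleGraph_isIndContained_of_pathGraph {n : ℕ} (f : pathGraph (n + 1) ↪g G) {v : V}
    (hv : v ∉ Set.range f) (h₀ : G.Adj v (f 0)) (hlast : G.Adj v (f (Fin.last n)))
    (hmid : ∀ i, i ≠ 0 → i ≠ Fin.last n → ¬ G.Adj v (f i)) : cycleGraph (n + 2) ⊴ G := by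
  have hadj : ∀ i, G.Adj v (f i) ↔ (cycleGraph (n + 2)).Adj (Fin.last (n + 1)) i.castSucc := by
    intro i
    rw [cycleGraph_adj_last_castSucc]
    refine ⟨fun h => ?_, by rintro (rfl | rfl) <;> assumption⟩
    by_contra! hi
    exact hmid i hi.1 hi.2 h
  let g : Fin (n + 2) → V := Fin.lastCases v f
  have g_inj : Injective g := by
    intro i j hij
    induction i using Fin.lastCases <;> induction j using Fin.lastCases <;>
      simp only [g, Fin.lastCases_last, Fin.lastCases_castSucc] at hij
    · rfl
    · exact absurd ⟨_, hij.symm⟩ hv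
    · exact absurd ⟨_, hij⟩ hv
    · rw [f.injective hij]
  have g_adj : ∀ i j, G.Adj (g i) (g j) ↔ (cycleGraph (n + 2)).Adj i j := by
    intro i j
    induction i using Fin.lastCases <;> induction j using Fin.lastCases <;>
      simp only [g, Fin.lastCases_last, Fin.lastCases_castSucc]
    · simp
    · exact hadj _
    · exact G.adj_comm _ _ |>.trans <| (hadj _).trans <| adj_comm _ _ _
    · exact f.map_adj_iff.trans cycleGraph_adj_castSucc.symm
  exact ⟨⟨⟨g, g_inj⟩, g_adj _ _⟩⟩

theorem Reachable.exists_pathGraph_embedding {u v : V} (h : G.Reachable u v) :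
    ∃ f : pathGraph (G.dist u v + 1) ↪g G, f 0 = u ∧ f (Fin.last _) = v := by
  obtain ⟨p, hp⟩ := h.exists_walk_length_eq_dist
  have no_shortcut : ∀ i j, i + 1 < j → j ≤ p.length → ¬ G.Adj (p.getVert i) (p.getVert j) := by
    intro i j hij hj hadj
    have := G.dist_le ((p.take i).append (Walk.cons hadj (p.drop j)))
    simp only [Walk.length_append, Walk.take_length, Walk.length_cons, Walk.drop_length] at this
    omega
  have adj_iff : ∀ i j : Fin (p.length + 1),
      G.Adj (p.getVert i) (p.getVert j) ↔ (pathGraph (p.length + 1)).Adj i j := by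
    intro i j
    rw [pathGraph_adj]
    refine ⟨fun hadj => ?_, ?_⟩
    · rcases lt_trichotomy i.val j.val with hij | hij | hij
      · by_contra
        exact no_shortcut i j (by omega) (by omega) hadj
      · exact absurd hadj (by rw [hij]; exact G.irrefl)
      · by_contra
        exact no_shortcut j i (by omega) (by omega) hadj.symm
    · rintro (hij | hij)
      · rw [← hij]; exact p.adj_getVert_succ (by omega)
      · rw [← hij]; exact (p.adj_getVert_succ (by omega)).symm
  rw [← hp]
  refine ⟨⟨⟨fun i => p.getVert i, fun i j hij => ?_⟩, adj_iff _ _⟩, p.getVert_zero, ?_⟩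
  · exact Fin.ext <| (Walk.isPath_of_length_eq_dist p hp).getVert_injOn
      (by simp only [Set.mem_ofPred_eq]; omega) (by simp only [Set.mem_ofPred_eq]; omega) hij
  · exact p.getVert_length

theorem Chordal.not_isIndContained (hG : G.Chordal) {n : ℕ} (hn : 4 ≤ n) :
    ¬ cycleGraph n ⊴ G :=
  not_nonempty_iff.2 (hG n hn)

theorem Chordal.of_embedding {H : SimpleGraph W} (hG : G.Chordal) (f : H ↪g G) : H.Chordal :=
  fun n hn => ⟨fun e => (hG n hn).false (f.comp e)⟩

theorem chordal_of_isPerfectEliminationRank [LinearOrder α] {r : V → α} (hr : Injective r)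
    (h : G.IsPerfectEliminationRank r) : G.Chordal := by
  intro n hn
  refine ⟨fun e => ?_⟩
  have : Nonempty (Fin n) := ⟨⟨0, by omega⟩⟩
  obtain ⟨k, hk⟩ := Finite.exists_max (r ∘ e)
  obtain ⟨a, b, ha, hb, hab, hnab⟩ := exists_adj_adj_not_adj_cycleGraph hn k
  have earlier : ∀ c, (cycleGraph n).Adj c k → e c ∈ {y | r y < r (e k) ∧ G.Adj y (e k)} :=
    fun c hc => ⟨(hk c).lt_of_ne (hr.ne (e.injective.ne hc.ne)), e.map_adj_iff.2 hc⟩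
  exact hnab (e.map_adj_iff.1 (h (e k) (earlier a ha) (earlier b hb) (e.injective.ne hab)))

theorem exists_preconnected_closed_subset (D : Set V) {w : V} (hw : w ∈ D) :
    ∃ C ⊆ D, w ∈ C ∧ (G.induce C).Preconnected ∧ ∀ c ∈ C, ∀ z ∈ D, G.Adj c z → z ∈ C := by
  classical
  set C : Set V := {z | ∃ p : G.Walk w z, ∀ y ∈ p.support, y ∈ D}
  have hwC : w ∈ C := ⟨.nil, by simpa using hw⟩
  have reach : ∀ z (hz : z ∈ C), (G.induce C).Reachable ⟨w, hwC⟩ ⟨z, hz⟩ := by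
    rintro z ⟨p, hp⟩
    refine ⟨p.induce C fun y hy => ⟨p.takeUntil y hy, fun u hu => hp u ?_⟩⟩
    exact p.support_takeUntil_subset_support hy hu
  refine ⟨C, fun z ⟨p, hp⟩ => hp z p.end_mem_support, hwC,
    fun a b => (reach a a.2).symm.trans (reach b b.2), ?_⟩
  rintro c ⟨p, hp⟩ z hz hcz
  refine ⟨p.concat hcz, fun y hy => ?_⟩
  rw [Walk.support_concat, List.mem_append, List.mem_singleton] at hy
  rcases hy with hy | rfl
  exacts [hp y hy, hz]

/-- A shortest `x`-`y` path through `C` is an induced path, which `v` closes up into an induced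
cycle of length at least 4. -/
theorem Chordal.adj_of_common_neighbor_of_preconnected (hG : G.Chordal) {C : Set V}
    (hC : (G.induce C).Preconnected) {v x y : V} (hvC : v ∉ C) (hv : ∀ c ∈ C, ¬ G.Adj v c)
    (hx : ∃ c ∈ C, G.Adj x c) (hy : ∃ c ∈ C, G.Adj y c)
    (hvx : G.Adj v x) (hvy : G.Adj v y) (hxy : x ≠ y) : G.Adj x y := by
  by_contra hnxy
  obtain ⟨cx, hcx, hxcx⟩ := hx
  obtain ⟨cy, hcy, hycy⟩ := hy
  set U : Set V := insert x (insert y C)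
  have hCU : C ⊆ U := fun c hc => .inr (.inr hc)
  have hxU : x ∈ U := .inl rfl
  have hyU : y ∈ U := .inr (.inl rfl)
  have hxcx' : (G.induce U).Adj ⟨x, hxU⟩ ⟨cx, hCU hcx⟩ := hxcx
  have hcyy' : (G.induce U).Adj ⟨cy, hCU hcy⟩ ⟨y, hyU⟩ := hycy.symm
  have hreach : (G.induce U).Reachable ⟨x, hxU⟩ ⟨y, hyU⟩ :=
    hxcx'.reachable.trans <|
      ((hC ⟨cx, hcx⟩ ⟨cy, hcy⟩).map (G.induceHomOfLE hCU).toHom).trans hcyy'.reachable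
  have hdist := hreach.one_lt_dist_of_ne_of_not_adj (by simpa using hxy) hnxy
  set d := (G.induce U).dist ⟨x, hxU⟩ ⟨y, hyU⟩
  obtain ⟨f, hf₀, hf⟩ := hreach.exists_pathGraph_embedding
  let g := (Embedding.induce U).comp f
  have hg₀ : g 0 = x := congrArg Subtype.val hf₀
  have hg : g (Fin.last d) = y := congrArg Subtype.val hf
  have hgC : ∀ i, i ≠ 0 → i ≠ Fin.last d → g i ∈ C := by
    intro i hi₀ hi
    rcases (f i).2 with h | h | h
    · exact absurd (g.injective (h.trans hg₀.symm)) hi₀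
    · exact absurd (g.injective (h.trans hg.symm)) hi
    · exact h
  refine hG.not_isIndContained (n := d + 2) (by omega) <|
    cycleGraph_isIndContained_of_pathGraph g ?_ (hg₀ ▸ hvx) (hg ▸ hvy)
      fun i hi₀ hi => hv _ (hgC i hi₀ hi)
  rintro ⟨i, hi⟩
  by_cases hi₀ : i = 0
  · subst hi₀
    exact hvx.ne (hi.symm.trans hg₀)
  by_cases hil : i = Fin.last d
  · subst hil
    exact hvy.ne (hi.symm.trans hg)
  exact hvC (hi ▸ hgC i hi₀ hil)

theorem isSimplicial_top (v : V) : (⊤ : SimpleGraph V).IsSimplicial v :=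
  (isClique_univ.2 rfl).subset (Set.subset_univ _)

theorem isSimplicial_of_induce {U : Set V} {x : U} (hU : ∀ y, G.Adj x y → y ∈ U)
    (h : (G.induce U).IsSimplicial x) : G.IsSimplicial x :=
  fun y hy z hz hyz =>
    h (x := ⟨y, hU y hy⟩) hy (y := ⟨z, hU z hz⟩) hz (hyz <| congrArg Subtype.val ·)

theorem exists_isSimplicial_of_induce {U S : Set V} (hS : G.IsClique S) (hUS : (U \ S).Nonempty)
    (hU : ∀ x ∈ U \ S, ∀ y, G.Adj x y → y ∈ U)
    (hdirac : G.induce U = ⊤ ∨ ∃ a b, a ≠ b ∧ ¬ (G.induce U).Adj a b ∧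
      (G.induce U).IsSimplicial a ∧ (G.induce U).IsSimplicial b) :
    ∃ x ∈ U \ S, G.IsSimplicial x := by
  have lift : ∀ a : U, (a : V) ∉ S → (G.induce U).IsSimplicial a → G.IsSimplicial a :=
    fun a haS ha => isSimplicial_of_induce (hU a ⟨a.2, haS⟩) ha
  rcases hdirac with htop | ⟨a, b, hab, hnab, ha, hb⟩
  · obtain ⟨x, hx⟩ := hUS
    refine ⟨x, hx, lift ⟨x, hx.1⟩ hx.2 ?_⟩
    rw [htop]
    exact isSimplicial_top _
  · by_cases haS : (a : V) ∈ S
    · have hbS : (b : V) ∉ S := fun hbS => hnab (hS haS hbS (Subtype.coe_injective.ne hab))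
      exact ⟨b, ⟨b.2, hbS⟩, lift b hbS hb⟩
    · exact ⟨a, ⟨a.2, haS⟩, lift a haS ha⟩

theorem Chordal.eq_top_or_exists_isSimplicial [Finite V] (hG : G.Chordal) :
    G = ⊤ ∨ ∃ a b, a ≠ b ∧ ¬ G.Adj a b ∧ G.IsSimplicial a ∧ G.IsSimplicial b := by
  induction hn : Nat.card V using Nat.strong_induction_on generalizing V with
  | _ n ih =>
  have ih_induce : ∀ U : Set V, (∃ y, y ∉ U) → G.induce U = ⊤ ∨ ∃ a b, a ≠ b ∧
      ¬ (G.induce U).Adj a b ∧ (G.induce U).IsSimplicial a ∧ (G.induce U).IsSimplicial b :=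
    fun U ⟨y, hy⟩ =>
      ih _ (hn ▸ Finite.card_subtype_lt hy) (hG.of_embedding (Embedding.induce U)) rfl
  refine or_iff_not_imp_left.2 fun hG_top => ?_
  obtain ⟨v, w, hvw, hnvw⟩ : ∃ v w, v ≠ w ∧ ¬ G.Adj v w := by
    by_contra! h
    exact hG_top (eq_top_iff.2 fun a b hab => h a b hab)
  obtain ⟨C, hCD, hwC, hC, hC_closed⟩ :=
    exists_preconnected_closed_subset (G := G) {z | z ≠ v ∧ ¬ G.Adj v z} ⟨hvw.symm, hnvw⟩
  set S : Set V := {x | x ∉ C ∧ ∃ c ∈ C, G.Adj x c}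
  have hvC : v ∉ C := fun h => (hCD h).1 rfl
  have hvS : ∀ x ∈ S, G.Adj v x := by
    rintro x ⟨hxC, c, hc, hxc⟩
    by_contra hvx
    have hxv : x ≠ v := by rintro rfl; exact (hCD hc).2 hxc
    exact hxC (hC_closed c hc x ⟨hxv, hvx⟩ hxc.symm)
  have hvS' : v ∉ S := fun ⟨_, c, hc, hvc⟩ => (hCD hc).2 hvc
  have hS : G.IsClique S := fun x hx y hy hxy =>
    hG.adj_of_common_neighbor_of_preconnected hC hvC (fun c hc => (hCD hc).2) hx.2 hy.2
      (hvS x hx) (hvS y hy) hxy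
  have closed_CS : ∀ x ∈ (C ∪ S) \ S, ∀ y, G.Adj x y → y ∈ C ∪ S := by
    rintro x ⟨hx, hxS⟩ y hxy
    by_cases hyC : y ∈ C
    exacts [.inl hyC, .inr ⟨hyC, x, hx.resolve_right hxS, hxy.symm⟩]
  have closed_compl : ∀ x ∈ Cᶜ \ S, ∀ y, G.Adj x y → y ∈ Cᶜ :=
    fun x ⟨hxC, hxS⟩ y hxy hyC => hxS ⟨hxC, y, hyC, hxy⟩
  obtain ⟨a, ⟨haCS, haS⟩, ha⟩ := exists_isSimplicial_of_induce hS
    ⟨w, .inl hwC, fun h => h.1 hwC⟩ closed_CS (ih_induce _ ⟨v, fun h => h.elim hvC hvS'⟩)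
  obtain ⟨b, ⟨hbC, hbS⟩, hb⟩ := exists_isSimplicial_of_induce hS
    ⟨v, hvC, hvS'⟩ closed_compl (ih_induce _ ⟨w, not_not.2 hwC⟩)
  have haC : a ∈ C := haCS.resolve_right haS
  exact ⟨a, b, fun h => hbC (h ▸ haC), fun hab => hbS ⟨hbC, a, haC, hab.symm⟩, ha, hb⟩

theorem Chordal.exists_isSimplicial [Finite V] [Nonempty V] (hG : G.Chordal) :
    ∃ v, G.IsSimplicial v := by
  rcases hG.eq_top_or_exists_isSimplicial with rfl | ⟨a, -, -, -, ha, -⟩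
  exacts [⟨Classical.arbitrary V, isSimplicial_top _⟩, ⟨a, ha⟩]

theorem IsPerfectEliminationRank.comp_strictMono {β : Type*} [LinearOrder α] [Preorder β]
    {r : V → α} (h : G.IsPerfectEliminationRank r) {f : α → β} (hf : StrictMono f) :
    G.IsPerfectEliminationRank (f ∘ r) := by
  intro x
  simpa only [Function.comp_apply, hf.lt_iff_lt] using h x

theorem IsPerfectEliminationRank.of_isSimplicial [Preorder α] {v : V} (hv : G.IsSimplicial v)
    {r : V → α} (hr : ∀ x, x ≠ v → r x < r v)
    (h : (G.induce {x | x ≠ v}).IsPerfectEliminationRank fun x => r x) :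
    G.IsPerfectEliminationRank r := by
  intro x
  by_cases hxv : x = v
  · subst hxv
    exact hv.subset fun y hy => hy.2.symm
  rintro y ⟨hyx, hy⟩ z ⟨hzx, hz⟩ hyz
  have hyv : y ≠ v := by rintro rfl; exact (hyx.trans (hr x hxv)).false
  have hzv : z ≠ v := by rintro rfl; exact (hzx.trans (hr x hxv)).false
  have hclique := h ⟨x, hxv⟩
  exact hclique (x := ⟨y, hyv⟩) ⟨hyx, hy⟩ (y := ⟨z, hzv⟩) ⟨hzx, hz⟩ (hyz <| congrArg Subtype.val ·)

theorem Chordal.exists_equiv_isPerfectEliminationRank [Finite V] (hG : G.Chordal) {n : ℕ}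
    (hn : Nat.card V = n) : ∃ e : V ≃ Fin n, G.IsPerfectEliminationRank e := by
  induction n generalizing V with
  | zero =>
    have : IsEmpty V := Finite.card_eq_zero_iff.1 hn
    exact ⟨Equiv.equivOfIsEmpty _ _, isEmptyElim⟩
  | succ n ih =>
    classical
    have : Nonempty V := Finite.card_pos_iff.1 (hn ▸ n.succ_pos)
    obtain ⟨v, hv⟩ := hG.exists_isSimplicial
    have hn' : Nat.card {x // x ≠ v} = n := by
      have := Nat.card_congr (Equiv.optionSubtypeNe v)
      rw [Finite.card_option] at this
      omega
    obtain ⟨e', he'⟩ := ih (hG.of_embedding (Embedding.induce {x | x ≠ v})) hn'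
    let e : V ≃ Fin (n + 1) :=
      (Equiv.optionSubtypeNe v).symm.trans ((Equiv.optionCongr e').trans finSuccEquivLast.symm)
    have he_v : e v = Fin.last n := by simp [e]
    have he_ne : ∀ x (hx : x ≠ v), e x = (e' ⟨x, hx⟩).castSucc := by
      intro x hx
      simp [e, Equiv.optionSubtypeNe_symm_of_ne hx]
    refine ⟨e, IsPerfectEliminationRank.of_isSimplicial hv (fun x hx => ?_) ?_⟩
    · rw [he_ne x hx, he_v]
      exact Fin.castSucc_lt_last _
    · convert he'.comp_strictMono Fin.strictMono_castSucc using 1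
      exact funext fun x => he_ne x x.2

end SimpleGraph

theorem isPerfectEliminationOrdering_iff_isPerfectEliminationRank {ℓ : ℕ}
    {G : SimpleGraph (Fin ℓ)} {σ : Equiv.Perm (Fin ℓ)} :
    IsPerfectEliminationOrdering G σ ↔ G.IsPerfectEliminationRank σ.symm := by
  unfold IsPerfectEliminationOrdering SimpleGraph.IsPerfectEliminationRank
  refine Iff.trans (forall_congr' fun i => ?_) σ.forall_congr_right
  have : {u | ∃ j, j < i ∧ u = σ j ∧ G.Adj (σ j) (σ i)} =
      {y | σ.symm y < σ.symm (σ i) ∧ G.Adj y (σ i)} := by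
    ext u
    constructor
    · rintro ⟨j, hj, rfl, h⟩
      simpa using ⟨hj, h⟩
    · rintro ⟨h₁, h₂⟩
      exact ⟨σ.symm u, by simpa using h₁, by simp, by simpa using h₂⟩
  rw [this]

/-- A finite simple graph is chordal if and only if it admits a perfect
elimination ordering. -/
theorem isChordal_iff_exists_perfectEliminationOrdering {ℓ : ℕ}
    (G : SimpleGraph (Fin ℓ)) :
    IsChordal G ↔ ∃ σ : Equiv.Perm (Fin ℓ), IsPerfectEliminationOrdering G σ := by
  simp only [isPerfectEliminationOrdering_iff_isPerfectEliminationRank]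
  constructor
  · intro hG
    obtain ⟨e, he⟩ := SimpleGraph.Chordal.exists_equiv_isPerfectEliminationRank hG (Nat.card_fin ℓ)
    exact ⟨e.symm, he⟩
  · rintro ⟨σ, hσ⟩
    exact SimpleGraph.chordal_of_isPerfectEliminationRank σ.symm.injective hσ
end

section
/- Let G be a finite simple graph on [ℓ] with a perfect elimination ordering (v_1, ..., v_ℓ), and let q be a prime power. For every k ≥ 0, the number of tuples (w_1, ..., w_ℓ) ∈ (F_q^k)^ℓ such that for every clique {i_1,...,i_p} of G the vectors w_{i_1}, ..., w_{i_p} are linearly independent over F_q equals the product over i = 1, ..., ℓ of (q^k - q^{d_i}), where d_i = |N_{G_i}(v_i)| is the number of neighbors of v_i among v_1, ..., v_{i-1}. -/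
open Finset Module Submodule

section

variable {F V : Type*} [Field F] [AddCommGroup V] [Module F V]

theorem finrank_span_image_finset {ι : Type*} {w : ι → V} {s : Finset ι}
    (hw : LinearIndepOn F w ↑s) : finrank F (span F (w '' ↑s)) = s.card := by
  rw [Set.image_eq_range, finrank_span_eq_card hw]
  simp

section Counting

variable [Finite F] [Module.Finite F V]

theorem natCard_notMem_submodule (U : Submodule F V) :
    (Nat.card {x : V // x ∉ U} : ℤ) = Nat.card F ^ finrank F V - Nat.card F ^ finrank F U := by
  classical
  have : Finite V := Module.finite_of_finite F
  have hsplit := Nat.card_congr (Equiv.sumCompl (· ∈ U))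
  rw [Nat.card_sum, Module.natCard_eq_pow_finrank (K := F),
    Module.natCard_eq_pow_finrank (K := F) (V := V)] at hsplit
  rw [eq_sub_iff_add_eq]
  exact_mod_cast (add_comm _ _).trans hsplit

theorem natCard_prod_notMem_eq_mul {A : Type*} [Finite A] (P : A → Prop) (S : A → Submodule F V)
    {d : ℕ} (hS : ∀ a, P a → finrank F (S a) = d) :
    (Nat.card {p : A × V // P p.1 ∧ p.2 ∉ S p.1} : ℤ) =
      Nat.card {a // P a} * (Nat.card F ^ finrank F V - Nat.card F ^ d) := by
  have : Fintype {a // P a} := Fintype.ofFinite _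
  have : Finite V := Module.finite_of_finite F
  let e : {p : A × V // P p.1 ∧ p.2 ∉ S p.1} ≃ Σ a : {a // P a}, {x : V // x ∉ S a} :=
    { toFun p := ⟨⟨p.1.1, p.2.1⟩, ⟨p.1.2, p.2.2⟩⟩
      invFun p := ⟨(p.1.1, p.2.1), p.1.2, p.2.2⟩ }
  rw [Nat.card_congr e, Nat.card_sigma, Nat.cast_sum,
    Finset.sum_congr rfl fun a _ => by rw [natCard_notMem_submodule, hS a a.2],
    Finset.sum_const, Finset.card_univ, nsmul_eq_mul, Nat.card_eq_fintype_card (α := {a // P a})]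

end Counting

namespace SimpleGraph

variable {ι κ : Type*}

variable (F) in
def IsCliqueIndependent (G : SimpleGraph ι) (v : ι → V) : Prop :=
  ∀ s : Set ι, G.IsClique s → LinearIndepOn F v s

theorem isClique_comap_iff {G : SimpleGraph κ} {f : ι → κ} (hf : Function.Injective f)
    {s : Set ι} : (G.comap f).IsClique s ↔ G.IsClique (f '' s) := by
  rw [isClique_iff, isClique_iff, hf.injOn.pairwise_image]
  rfl

theorem IsCliqueIndependent.comap {G : SimpleGraph κ} {v : κ → V}
    (hv : G.IsCliqueIndependent F v) {f : ι → κ} (hf : Function.Injective f) :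
    (G.comap f).IsCliqueIndependent F (v ∘ f) := fun _ hs =>
  (hv _ ((isClique_comap_iff hf).1 hs)).comp_of_image hf.injOn

theorem isCliqueIndependent_comap_equiv_iff {G : SimpleGraph κ} {v : κ → V} (e : ι ≃ κ) :
    (G.comap e).IsCliqueIndependent F (v ∘ e) ↔ G.IsCliqueIndependent F v := by
  refine ⟨fun h s hs => ?_, fun h => h.comap e.injective⟩
  have hclique : (G.comap e).IsClique (e ⁻¹' s) := by
    rwa [isClique_comap_iff e.injective, e.image_preimage]
  simpa [e.image_preimage] using (h _ hclique).image_of_comp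

theorem isCliqueIndependent_iff_finset [Finite ι] {G : SimpleGraph ι} {v : ι → V} :
    G.IsCliqueIndependent F v ↔ ∀ s : Finset ι, G.IsClique ↑s → LinearIndepOn F v ↑s :=
  ⟨fun h s => h s, fun h s => by simpa using h (Set.toFinite s).toFinset⟩

section Fin

variable {n : ℕ}

def earlierNeighbors (H : SimpleGraph (Fin n)) [DecidableRel H.Adj] (i : Fin n) :
    Finset (Fin n) :=
  {j | j < i ∧ H.Adj j i}

def lastNeighbors (H : SimpleGraph (Fin (n + 1))) [DecidableRel H.Adj] : Finset (Fin n) :=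
  {j | H.Adj j.castSucc (Fin.last n)}

@[simp]
theorem mem_earlierNeighbors (H : SimpleGraph (Fin n)) [DecidableRel H.Adj] {i j : Fin n} :
    j ∈ earlierNeighbors H i ↔ j < i ∧ H.Adj j i := by
  simp [earlierNeighbors]

variable (H : SimpleGraph (Fin (n + 1))) [DecidableRel H.Adj]

theorem map_earlierNeighbors_comap_castSucc (i : Fin n) :
    (earlierNeighbors (H.comap Fin.castSucc) i).map Fin.castSuccEmb =
      earlierNeighbors H i.castSucc := by
  ext j
  induction j using Fin.lastCases <;> simp [earlierNeighbors, (Fin.castSucc_lt_last i).not_gt]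

theorem map_lastNeighbors :
    (lastNeighbors H).map Fin.castSuccEmb = earlierNeighbors H (Fin.last n) := by
  ext j
  induction j using Fin.lastCases <;> simp [earlierNeighbors, lastNeighbors, Fin.castSucc_lt_last]

theorem image_castSucc_lastNeighbors :
    Fin.castSucc '' ↑(lastNeighbors H) =
      (earlierNeighbors H (Fin.last n) : Set (Fin (n + 1))) := by
  rw [← map_lastNeighbors, Finset.coe_map]
  rfl

theorem isCliqueIndependent_snoc_iff (hlast : H.IsClique ↑(earlierNeighbors H (Fin.last n)))
    {w : Fin n → V} {x : V} :
    H.IsCliqueIndependent F (Fin.snoc w x : Fin (n + 1) → V) ↔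
      (H.comap Fin.castSucc).IsCliqueIndependent F w ∧
        x ∉ span F (w '' ↑(lastNeighbors H)) := by
  have hspan :
      span F ((Fin.snoc w x : Fin (n + 1) → V) '' (Fin.castSucc '' ↑(lastNeighbors H))) =
        span F (w '' ↑(lastNeighbors H)) := by
    rw [Set.image_image]; simp
  constructor
  · intro h
    refine ⟨by simpa using h.comap (Fin.castSucc_injective n), ?_⟩
    have hclique : H.IsClique (insert (Fin.last n) (Fin.castSucc '' ↑(lastNeighbors H))) := by
      rw [image_castSucc_lastNeighbors]
      exact hlast.insert fun j hj _ => ((mem_earlierNeighbors H).1 hj).2.symm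
    have := h _ hclique
    rw [linearIndepOn_insert (by simp [Fin.castSucc_ne_last])] at this
    simpa [hspan] using this.2
  · rintro ⟨hw, hx⟩ s hs
    set v : Fin (n + 1) → V := Fin.snoc w x
    set t := Fin.castSucc ⁻¹' s
    have ht : LinearIndepOn F v (Fin.castSucc '' t) := by
      have := hw t ((isClique_comap_iff (Fin.castSucc_injective n)).2
        (hs.subset (Set.image_preimage_subset _ _)))
      exact LinearIndepOn.image_of_comp _ _ (by simpa [v] using this)
    have hsub : s ⊆ insert (Fin.last n) (Fin.castSucc '' t) := by
      intro j hj
      induction j using Fin.lastCases <;> simp_all [t]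
    by_cases hlast_mem : Fin.last n ∈ s
    · have hnbr : Fin.castSucc '' t ⊆ Fin.castSucc '' ↑(lastNeighbors H) :=
        Set.image_mono fun j hj => by
          simpa [lastNeighbors] using hs hj hlast_mem (Fin.castSucc_ne_last j)
      refine ((linearIndepOn_insert ?_).2 ⟨ht, fun hmem => hx ?_⟩).mono hsub
      · simp [Fin.castSucc_ne_last]
      · rw [← hspan]
        exact span_mono (Set.image_mono hnbr) (by simpa [v] using hmem)
    · exact ht.mono fun j hj => (hsub hj).resolve_left fun hj_last => hlast_mem (hj_last ▸ hj)

end Fin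

variable [Finite F] [Module.Finite F V]

theorem natCard_isCliqueIndependent {n : ℕ} (H : SimpleGraph (Fin n)) [DecidableRel H.Adj]
    (hH : ∀ i, H.IsClique ↑(earlierNeighbors H i)) :
    (Nat.card {v : Fin n → V // H.IsCliqueIndependent F v} : ℤ) =
      ∏ i, ((Nat.card F : ℤ) ^ finrank F V - Nat.card F ^ (earlierNeighbors H i).card) := by
  have : Finite V := Module.finite_of_finite F
  induction n with
  | zero =>
    have hv : H.IsCliqueIndependent F (finZeroElim : Fin 0 → V) := fun s _ => by
      simp [Set.eq_empty_of_isEmpty s]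
    simpa using Nat.card_eq_one_iff_unique.2 ⟨inferInstance, ⟨⟨_, hv⟩⟩⟩
  | succ n ih =>
    set H' := H.comap Fin.castSucc
    have hclique (s : Finset (Fin n)) (hs : H.IsClique ↑(s.map Fin.castSuccEmb)) :
        H'.IsClique ↑s :=
      (isClique_comap_iff (Fin.castSucc_injective n)).2 (by simpa using hs)
    have hH' (i : Fin n) : H'.IsClique ↑(earlierNeighbors H' i) :=
      hclique _ (by rw [map_earlierNeighbors_comap_castSucc]; exact hH _)
    have hfinrank (w : Fin n → V) (hw : H'.IsCliqueIndependent F w) :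
        finrank F (span F (w '' ↑(lastNeighbors H))) =
          (earlierNeighbors H (Fin.last n)).card := by
      rw [finrank_span_image_finset (hw _ (hclique _ (by rw [map_lastNeighbors]; exact hH _))),
        ← map_lastNeighbors, card_map]
    let e : {p : (Fin n → V) × V //
          H'.IsCliqueIndependent F p.1 ∧ p.2 ∉ span F (p.1 '' ↑(lastNeighbors H))} ≃
        {v : Fin (n + 1) → V // H.IsCliqueIndependent F v} :=
      ((Equiv.prodComm _ _).trans (Fin.snocEquiv fun _ => V)).subtypeEquiv fun p =>
        (isCliqueIndependent_snoc_iff H (hH _)).symm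
    rw [← Nat.card_congr e, natCard_prod_notMem_eq_mul _ _ hfinrank, ih H' hH',
      Fin.prod_univ_castSucc]
    simp [← map_earlierNeighbors_comap_castSucc, H']

end SimpleGraph

end

theorem IsPerfectEliminationOrdering.isClique_earlierNeighbors_comap {ℓ : ℕ}
    {G : SimpleGraph (Fin ℓ)} [DecidableRel G.Adj] {σ : Equiv.Perm (Fin ℓ)}
    (hσ : IsPerfectEliminationOrdering G σ) (i : Fin ℓ) :
    (G.comap σ).IsClique ↑((G.comap σ).earlierNeighbors i) := by
  rw [SimpleGraph.isClique_comap_iff σ.injective]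
  refine (hσ i).subset ?_
  rintro _ ⟨j, hj, rfl⟩
  simp only [Finset.mem_coe, SimpleGraph.mem_earlierNeighbors, SimpleGraph.comap_adj] at hj
  exact ⟨j, hj.1, rfl, hj.2⟩

theorem qGraphical_count_chordal_general {F : Type*} [Field F] [Fintype F]
    (q : ℕ) (hq : q = Fintype.card F) {ℓ : ℕ} (G : SimpleGraph (Fin ℓ))
    [DecidableRel G.Adj] (σ : Equiv.Perm (Fin ℓ))
    (hσ : IsPerfectEliminationOrdering G σ) (k : ℕ) :
    (Nat.card {v : Fin ℓ → (Fin k → F) //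
        ∀ s : Finset (Fin ℓ), G.IsClique ↑s → LinearIndependent F (fun i : s => v i)}
      : ℤ) =
      ∏ i : Fin ℓ,
        ((q : ℤ) ^ k -
          (q : ℤ) ^ (Finset.univ.filter
            (fun j : Fin ℓ => j < i ∧ G.Adj (σ j) (σ i))).card) := by
  subst hq
  have hcard :
      Nat.card {v : Fin ℓ → (Fin k → F) //
        ∀ s : Finset (Fin ℓ), G.IsClique ↑s → LinearIndependent F (fun i : s => v i)} =
      Nat.card {u : Fin ℓ → (Fin k → F) // (G.comap σ).IsCliqueIndependent F u} :=
    Nat.card_congr ((σ.symm.arrowCongr (Equiv.refl _)).subtypeEquiv fun v =>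
      SimpleGraph.isCliqueIndependent_iff_finset.symm.trans
        (SimpleGraph.isCliqueIndependent_comap_equiv_iff σ).symm)
  rw [hcard, SimpleGraph.natCard_isCliqueIndependent _ hσ.isClique_earlierNeighbors_comap,
    Module.finrank_fin_fun, Nat.card_eq_fintype_card]
  rfl

/-- For a graph `G` on `[ℓ]` with a perfect elimination ordering, the number of
tuples in `(F_q^k)^ℓ` whose vectors along every clique are linearly independent
equals `∏ᵢ (q^k - q^{dᵢ})`, where `dᵢ` is the number of earlier neighbors of the
`i`-th vertex. -/
theorem qGraphical_count_chordal {F : Type*} [Field F] [Fintype F] [DecidableEq F]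
    (q : ℕ) (hq : q = Fintype.card F) {ℓ : ℕ} (G : SimpleGraph (Fin ℓ))
    [DecidableRel G.Adj] (σ : Equiv.Perm (Fin ℓ))
    (hσ : IsPerfectEliminationOrdering G σ) (k : ℕ) :
    (Nat.card {v : Fin ℓ → (Fin k → F) //
        ∀ s : Finset (Fin ℓ), G.IsClique ↑s → LinearIndependent F (fun i : s => v i)}
      : ℤ) =
      ∏ i : Fin ℓ,
        ((q : ℤ) ^ k -
          (q : ℤ) ^ (Finset.univ.filter
            (fun j : Fin ℓ => j < i ∧ G.Adj (σ j) (σ i))).card) :=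
  qGraphical_count_chordal_general q hq G σ hσ k
end
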